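/- For every λ ∈ ℝ, with P_λ(x) = 2Q(x) + ((3−λ)/2)·x·Q'(x), one has the identity (2λ − 3)·∫(Q')² + ∫((λ−3)·Q'' − Q²)·P_λ = −((15 + 10λ − λ²)/20)·∫Q² (all integrals over ℝ). -/

import Mathlib

open Real MeasureTheory Filter

noncomputable section

/-- `Qs x = (3/2) * sech²(x/2)`. -/
def Qs (x : ℝ) : ℝ := (3/2) * (1 / Real.cosh (x/2))^2

/-- The solitary wave profile `φ_c`. -/
def phic (c : ℝ) (x : ℝ) : ℝ := (c - 1) * Qs (Real.sqrt ((c - 1)/c) * x)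

/-- The linearized operator `L f = -f'' + f - 2 Q f`. -/
def Lop (f : ℝ → ℝ) (x : ℝ) : ℝ := -(iteratedDeriv 2 f x) + f x - 2 * Qs x * f x

/-- `φ = -Q'/Q`. -/
def phi0 (x : ℝ) : ℝ := -(deriv Qs x / Qs x)

/-- `P_λ = 2Q + ((3-λ)/2) x Q'`. -/
def Pl (lam : ℝ) (x : ℝ) : ℝ := 2 * Qs x + ((3 - lam)/2) * x * deriv Qs x

/-- The space `𝒴` of smooth functions with exponential decay of all derivatives. -/
def inY (f : ℝ → ℝ) : Prop :=
  ContDiff ℝ (⊤ : ℕ∞) f ∧ ∀ j : ℕ, ∃ K r : ℝ, 0 < K ∧ 0 < r ∧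
    ∀ x : ℝ, |iteratedDeriv j f x| ≤ K * (1 + |x|) ^ r * Real.exp (-|x|)

/-- The `H¹(ℝ)` norm. -/
def H1norm (v : ℝ → ℝ) : ℝ := Real.sqrt (∫ x : ℝ, ((v x)^2 + (deriv v x)^2))

/-- The `H¹` norm restricted to a set. -/
def H1normOn (s : Set ℝ) (v : ℝ → ℝ) : ℝ :=
  Real.sqrt (∫ x in s, ((v x)^2 + (deriv v x)^2))

/-- The weighted norm `H¹_c`. -/
def H1cnorm (c : ℝ) (v : ℝ → ℝ) : ℝ :=
  Real.sqrt (∫ x : ℝ, ((deriv v x)^2 + (c - 1) * (v x)^2))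

/-- The `L²(ℝ)` norm. -/
def L2norm (v : ℝ → ℝ) : ℝ := Real.sqrt (∫ x : ℝ, (v x)^2)

/-- The BBM residual `(1-∂ₓ²)∂ₜu + ∂ₓ(u+u²)` at `(t,x)`. -/
def bbmRes (u : ℝ → ℝ → ℝ) (t x : ℝ) : ℝ :=
  deriv (fun s => u s x) t
    - iteratedDeriv 2 (fun y => deriv (fun s => u s y) t) x
    + deriv (fun y => u t y + (u t y)^2) x

/-- An `H¹` solution of the BBM equation. -/
def IsBBMSol (u : ℝ → ℝ → ℝ) : Prop :=
  (Continuous fun p : ℝ × ℝ => u p.1 p.2) ∧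
  (∀ t : ℝ, Integrable (fun x => (u t x)^2) ∧ Integrable (fun x => (deriv (u t) x)^2)) ∧
  (∀ t x : ℝ, bbmRes u t x = 0)

/-- The energy `E(u) = ∫ (u²/2 + u³/3)`. -/
def Efun (u : ℝ → ℝ) : ℝ := ∫ x : ℝ, ((u x)^2/2 + (u x)^3/3)

/-- `N(u) = (1/2) ∫ (uₓ² + u²)`. -/
def Nfun (u : ℝ → ℝ) : ℝ := (1/2) * ∫ x : ℝ, ((deriv u x)^2 + (u x)^2)

/-- The collision time scale `T`. -/
def Tcol (c1 c2 : ℝ) : ℝ :=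
  ((c2 - 1)/c2) ^ (-(1/2 : ℝ) - 1/100)
    * ((1 - (c1 - 1)/c1)/((c1 - 1)/c1)) * ((c1 - 1)/c1) ^ ((1 : ℝ)/100)

/-- The index set `Σ₀ = {(k,l) : k ≥ 1, k+l ≤ 3}`. -/
def Sigma0 : Finset (ℕ × ℕ) :=
  (Finset.range 4 ×ˢ Finset.range 4).filter (fun p => 1 ≤ p.1 ∧ p.1 + p.2 ≤ 3)

end

/-!
With `b = ∫ Q²`, differentiating `Q Q'` and using `Q'' = Q - Q²` together with the first
integral `Q'² = Q² - 2/3 Q³` gives `∫ Q³ = 6/5 b`, hence `∫ Q'² = b/5`; differentiating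
`x Qᵏ⁺¹` gives `∫ x Qᵏ Q' = -∫ Qᵏ⁺¹ / (k + 1)`. After expanding `P_λ` every term of the
identity is an explicit multiple of `b`, so the value of `b` is never needed. All boundary terms
vanish because `(1 + |x|) Q(x) ≤ 576 / (1 + x²)`, which follows from `cosh y ≥ 1 + y²/4`.
-/

lemma Real.one_add_sq_div_four_le_cosh (y : ℝ) : 1 + y ^ 2 / 4 ≤ cosh y := by
  rw [← cosh_abs, cosh_eq, ← sq_abs]
  have h₁ := quadratic_le_exp_of_nonneg (abs_nonneg y)
  have h₂ := add_one_le_exp (-|y|)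
  linarith

lemma tanh_half_sq (x : ℝ) : tanh (x / 2) ^ 2 = 1 - 2 / 3 * Qs x := by
  have := (cosh_pos (x / 2)).ne'
  rw [tanh_eq_sinh_div_cosh, Qs]
  field_simp
  linear_combination -cosh_sq (x / 2)

lemma hasDerivAt_Qs (x : ℝ) : HasDerivAt Qs (-(Qs x * tanh (x / 2))) x := by
  have hc := ((hasDerivAt_id' x).div_const 2).cosh
  have hQ : (fun y => 3 / 2 / (cosh (y / 2) * cosh (y / 2))) = Qs := funext fun y => by
    rw [Qs]; ring
  have hc₀ := (cosh_pos (x / 2)).ne'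
  have h := (hasDerivAt_const x (3 / 2 : ℝ)).fun_div (hc.fun_mul hc) (mul_ne_zero hc₀ hc₀)
  rw [hQ] at h
  refine h.congr_deriv ?_
  rw [Qs, tanh_eq_sinh_div_cosh]
  field_simp
  ring

lemma hasDerivAt_tanh_half (x : ℝ) : HasDerivAt (fun y => tanh (y / 2)) (Qs x / 3) x := by
  have hs := ((hasDerivAt_id' x).div_const 2).sinh
  have hc := ((hasDerivAt_id' x).div_const 2).cosh
  have := (cosh_pos (x / 2)).ne'
  simp_rw [tanh_eq_sinh_div_cosh]
  refine (hs.fun_div hc this).congr_deriv ?_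
  rw [Qs]
  field_simp
  linear_combination cosh_sq (x / 2)

lemma deriv_Qs : deriv Qs = fun x => -(Qs x * tanh (x / 2)) :=
  funext fun x => (hasDerivAt_Qs x).deriv

lemma hasDerivAt_deriv_Qs (x : ℝ) : HasDerivAt (deriv Qs) (Qs x - Qs x ^ 2) x := by
  rw [deriv_Qs]
  refine ((hasDerivAt_Qs x).fun_mul (hasDerivAt_tanh_half x)).fun_neg.congr_deriv ?_
  linear_combination Qs x * tanh_half_sq x

lemma iteratedDeriv_two_Qs (x : ℝ) : iteratedDeriv 2 Qs x = Qs x - Qs x ^ 2 := by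
  rw [iteratedDeriv_succ, iteratedDeriv_one]
  exact (hasDerivAt_deriv_Qs x).deriv

/-- The first integral of `Q'' = Q - Q²`. -/
lemma deriv_Qs_sq (x : ℝ) : deriv Qs x ^ 2 = Qs x ^ 2 - 2 / 3 * Qs x ^ 3 := by
  rw [deriv_Qs]
  linear_combination Qs x ^ 2 * tanh_half_sq x

lemma Qs_nonneg (x : ℝ) : 0 ≤ Qs x := by
  unfold Qs; positivity

lemma Qs_le_three_halves (x : ℝ) : Qs x ≤ 3 / 2 := by
  have h : 1 / cosh (x / 2) ≤ 1 := by
    rw [div_le_one (cosh_pos _)]; exact one_le_cosh _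
  unfold Qs
  nlinarith [pow_le_one₀ (by positivity) h (n := 2)]

lemma abs_deriv_Qs_le (x : ℝ) : |deriv Qs x| ≤ Qs x :=
  abs_le_of_sq_le_sq (by nlinarith [deriv_Qs_sq x, Qs_nonneg x]) (Qs_nonneg x)

lemma one_add_abs_mul_Qs_le (x : ℝ) : (1 + |x|) * Qs x ≤ 576 * (1 + x ^ 2)⁻¹ := by
  have hc := one_add_sq_div_four_le_cosh (x / 2)
  have hc0 := cosh_pos (x / 2)
  rw [Qs, ← div_eq_mul_inv, le_div_iff₀ (by positivity)]
  field_simp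
  nlinarith [sq_abs x, abs_nonneg x, mul_le_mul hc hc (by positivity) hc0.le]

@[fun_prop]
lemma continuous_Qs : Continuous Qs :=
  continuous_iff_continuousAt.2 fun x => (hasDerivAt_Qs x).continuousAt

lemma differentiable_Qs : Differentiable ℝ Qs :=
  fun x => (hasDerivAt_Qs x).differentiableAt

@[fun_prop]
lemma continuous_deriv_Qs : Continuous (deriv Qs) :=
  continuous_iff_continuousAt.2 fun x => (hasDerivAt_deriv_Qs x).continuousAt

lemma Qs_pow_succ_le (n : ℕ) (x : ℝ) : Qs x ^ (n + 1) ≤ (3 / 2) ^ n * Qs x := by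
  rw [pow_succ]
  exact mul_le_mul_of_nonneg_right (pow_le_pow_left₀ (Qs_nonneg x) (Qs_le_three_halves x) n)
    (Qs_nonneg x)

lemma integrable_one_add_abs_mul_Qs : Integrable fun x => (1 + |x|) * Qs x :=
  (integrable_inv_one_add_sq.const_mul 576).mono' (by fun_prop : Continuous _).aestronglyMeasurable
    (ae_of_all _ fun x => by
      rw [Real.norm_of_nonneg (mul_nonneg (by positivity) (Qs_nonneg x))]
      exact one_add_abs_mul_Qs_le x)

lemma integrable_Qs_pow_succ (n : ℕ) : Integrable fun x => Qs x ^ (n + 1) := by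
  refine (integrable_one_add_abs_mul_Qs.const_mul ((3 / 2) ^ n)).mono'
    (by fun_prop : Continuous _).aestronglyMeasurable (ae_of_all _ fun x => ?_)
  rw [Real.norm_of_nonneg (pow_nonneg (Qs_nonneg x) _)]
  calc Qs x ^ (n + 1) ≤ (3 / 2) ^ n * Qs x := Qs_pow_succ_le n x
    _ ≤ (3 / 2) ^ n * ((1 + |x|) * Qs x) := by
      gcongr
      exact le_mul_of_one_le_left (Qs_nonneg x) (by linarith [abs_nonneg x])

lemma integrable_id_mul_Qs_pow_succ (n : ℕ) : Integrable fun x => x * Qs x ^ (n + 1) := by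
  refine (integrable_one_add_abs_mul_Qs.const_mul ((3 / 2) ^ n)).mono'
    (by fun_prop : Continuous _).aestronglyMeasurable (ae_of_all _ fun x => ?_)
  rw [norm_mul, Real.norm_eq_abs, Real.norm_of_nonneg (pow_nonneg (Qs_nonneg x) _)]
  calc |x| * Qs x ^ (n + 1) ≤ |x| * ((3 / 2) ^ n * Qs x) := by gcongr; exact Qs_pow_succ_le n x
    _ ≤ (3 / 2) ^ n * ((1 + |x|) * Qs x) := by
      nlinarith [mul_nonneg (pow_nonneg (by norm_num : (0 : ℝ) ≤ 3 / 2) n) (Qs_nonneg x)]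

lemma integrable_Qs_mul_deriv_Qs : Integrable fun x => Qs x * deriv Qs x := by
  have hQ₂ : Integrable fun x => Qs x ^ 2 := integrable_Qs_pow_succ 1
  refine hQ₂.mono (by fun_prop : Continuous _).aestronglyMeasurable (ae_of_all _ fun x => ?_)
  simp only [norm_mul, Real.norm_eq_abs, abs_of_nonneg (Qs_nonneg x), sq]
  exact mul_le_mul_of_nonneg_left (abs_deriv_Qs_le x) (Qs_nonneg x)

lemma integrable_id_mul_Qs_pow_mul_deriv_Qs (k : ℕ) :
    Integrable fun x => x * (Qs x ^ k * deriv Qs x) :=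
  (integrable_id_mul_Qs_pow_succ k).mono (by fun_prop : Continuous _).aestronglyMeasurable
    (ae_of_all _ fun x => by
      simp only [norm_mul, norm_pow, Real.norm_eq_abs, abs_of_nonneg (Qs_nonneg x), pow_succ]
      exact mul_le_mul_of_nonneg_left
        (mul_le_mul_of_nonneg_left (abs_deriv_Qs_le x) (pow_nonneg (Qs_nonneg x) k)) (abs_nonneg x))

/-- A virial identity: `(x fᵏ⁺¹)' = fᵏ⁺¹ + (k + 1) x fᵏ f'` integrates to zero. -/
theorem integral_id_mul_pow_mul_deriv {f f' : ℝ → ℝ} (hf : ∀ x, HasDerivAt f (f' x) x)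
    (k : ℕ) (h₁ : Integrable fun x => x * (f x ^ k * f' x))
    (h₂ : Integrable fun x => f x ^ (k + 1))
    (h₃ : Integrable fun x => x * f x ^ (k + 1)) :
    ∫ x, x * (f x ^ k * f' x) = -(∫ x, f x ^ (k + 1)) / (k + 1) := by
  have hd : ∀ x, HasDerivAt (fun x => x * f x ^ (k + 1))
      (f x ^ (k + 1) + (k + 1) * (x * (f x ^ k * f' x))) x := fun x =>
    ((hasDerivAt_id' x).fun_mul ((hf x).fun_pow (k + 1))).congr_deriv (by push_cast; ring)
  have h₀ := integral_eq_zero_of_hasDerivAt_of_integrable hd (h₂.add (h₁.const_mul _)) h₃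
  rw [integral_add h₂ (h₁.const_mul _), integral_const_mul] at h₀
  rw [eq_div_iff (by positivity)]
  linarith

/-- Pohozaev-type identity: `(Q Q')' = Q'² + Q Q'' = 2 Q² - 5/3 Q³`. -/
lemma integral_Qs_cube : ∫ x, Qs x ^ 3 = 6 / 5 * ∫ x, Qs x ^ 2 := by
  have hd : ∀ x, HasDerivAt (fun x => Qs x * deriv Qs x) (2 * Qs x ^ 2 - 5 / 3 * Qs x ^ 3) x :=
    fun x => ((differentiable_Qs x).hasDerivAt.fun_mul (hasDerivAt_deriv_Qs x)).congr_deriv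
      (by linear_combination deriv_Qs_sq x)
  have h₀ := integral_eq_zero_of_hasDerivAt_of_integrable hd
    (((integrable_Qs_pow_succ 1).const_mul 2).sub ((integrable_Qs_pow_succ 2).const_mul _))
    integrable_Qs_mul_deriv_Qs
  rw [integral_sub ((integrable_Qs_pow_succ 1).const_mul 2)
    ((integrable_Qs_pow_succ 2).const_mul _), integral_const_mul, integral_const_mul] at h₀
  linarith

lemma integral_deriv_Qs_sq : ∫ x, deriv Qs x ^ 2 = 1 / 5 * ∫ x, Qs x ^ 2 := by
  simp_rw [deriv_Qs_sq]
  rw [integral_sub (integrable_Qs_pow_succ 1) ((integrable_Qs_pow_succ 2).const_mul _),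
    integral_const_mul, integral_Qs_cube]
  ring

lemma integral_id_mul_Qs_pow_mul_deriv_Qs (k : ℕ) :
    ∫ x, x * (Qs x ^ k * deriv Qs x) = -(∫ x, Qs x ^ (k + 1)) / (k + 1) :=
  integral_id_mul_pow_mul_deriv (fun x => (differentiable_Qs x).hasDerivAt) k
    (integrable_id_mul_Qs_pow_mul_deriv_Qs k) (integrable_Qs_pow_succ k)
    (integrable_id_mul_Qs_pow_succ k)

/-- the key integral identity involving `P_λ`. -/
theorem Pl_integral_identity (lam : ℝ) :
    (2*lam - 3) * (∫ x : ℝ, (deriv Qs x)^2)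
      + (∫ x : ℝ, ((lam - 3) * iteratedDeriv 2 Qs x - (Qs x)^2) * Pl lam x)
      = -((15 + 10*lam - lam^2)/20) * ∫ x : ℝ, (Qs x)^2 := by
  have hP : ∀ x, ((lam - 3) * iteratedDeriv 2 Qs x - Qs x ^ 2) * Pl lam x
      = (2 * (lam - 3) * Qs x ^ 2 - 2 * (lam - 2) * Qs x ^ 3)
        + ((lam - 3) * (lam - 2) / 2 * (x * (Qs x ^ 2 * deriv Qs x))
          - (lam - 3) ^ 2 / 2 * (x * (Qs x ^ 1 * deriv Qs x))) := by
    intro x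
    rw [iteratedDeriv_two_Qs, Pl]
    ring
  have hQ₂ : Integrable fun x => Qs x ^ 2 := integrable_Qs_pow_succ 1
  have hQ₃ : Integrable fun x => Qs x ^ 3 := integrable_Qs_pow_succ 2
  have hV₁ := integrable_id_mul_Qs_pow_mul_deriv_Qs 1
  have hV₂ := integrable_id_mul_Qs_pow_mul_deriv_Qs 2
  simp_rw [hP]
  rw [integral_add, integral_sub, integral_sub, integral_const_mul, integral_const_mul,
    integral_const_mul, integral_const_mul, integral_id_mul_Qs_pow_mul_deriv_Qs,
    integral_id_mul_Qs_pow_mul_deriv_Qs, integral_deriv_Qs_sq, integral_Qs_cube]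
  · push_cast
    ring
  all_goals fun_prop
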